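/- arXiv:2208.10074 — 2 statements merged into one kernel-verified Lean document; each statement's English description precedes it below -/
import Mathlib

section
/- Let p, q, k, n be positive integers with n ≤ ⌊p/(k+1)⌋·(q+1) + q + k − 1 and p ≥ k+1. Then any n-vertex graph G with tree-width at most k has a set S of at most p vertices such that each connected component of G − S has at most q vertices. -/
/-!
Fix a tree-decomposition of width `k`. Call a vertex *beyond* a tree edge `st` if it lies in a bag
on the `t`-side of the edge but not in the bag of `s`; its neighbours then lie in bags on the
`t`-side. Walking away from an edge beyond which more than `q` vertices lie, we reach an edge `st`
beyond which more than `q` vertices lie but beyond each further edge `tc` at most `q`. Let `A` be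
the set of vertices on the `t`-side outside the bag of `t`, enlarged by vertices of the bag of `t`
beyond `st` until it has at least `q` elements. Its components have at most `q` vertices (each lies
beyond a single edge `tc`, or `A` has exactly `q` vertices), so deleting the at most `k + 1` other
vertices on the `t`-side cuts off at least `q + 1` vertices, of which at least `q` survive.
Repeating this on the rest of the graph costs `k + 1` deletions per `q + 1` vertices; thanks to the
survivors, the last round can handle `2q + k` vertices, whence the bound
`⌊p/(k+1)⌋ (q + 1) + q + k - 1`.
-/

open SimpleGraph

/-- The strong product of two simple graphs. -/
def StrongProd {V W : Type*} (G : SimpleGraph V) (H : SimpleGraph W) : SimpleGraph (V × W) where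
  Adj a b := a ≠ b ∧ (a.1 = b.1 ∨ G.Adj a.1 b.1) ∧ (a.2 = b.2 ∨ H.Adj a.2 b.2)
  symm := ⟨by
    rintro a b ⟨hne, h1, h2⟩
    exact ⟨hne.symm, h1.imp Eq.symm (fun h => h.symm), h2.imp Eq.symm (fun h => h.symm)⟩⟩
  loopless := ⟨by rintro a ⟨hne, _⟩; exact hne rfl⟩

/-- `G` is isomorphic to a subgraph of `H`. -/
def ContainedIn {V W : Type*} (G : SimpleGraph V) (H : SimpleGraph W) : Prop :=
  ∃ f : V → W, Function.Injective f ∧ ∀ ⦃u v⦄, G.Adj u v → H.Adj (f u) (f v)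

/-- Every connected component of `G - S` has at most `q` vertices. -/
def CompsLE {V : Type*} (G : SimpleGraph V) (S : Set V) (q : ℕ) : Prop :=
  ∀ c : (G.induce Sᶜ).ConnectedComponent, Nat.card c.supp ≤ q

/-- Every connected component of `G - S` has at most `q` vertices (real bound). -/
def CompsLER {V : Type*} (G : SimpleGraph V) (S : Set V) (q : ℝ) : Prop :=
  ∀ c : (G.induce Sᶜ).ConnectedComponent, (Nat.card c.supp : ℝ) ≤ q

/-- `(TG, B)` is a tree-decomposition of `G`: `TG` is a tree, every vertex and
every edge of `G` lies in some bag, and for each vertex the set of nodes whose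
bag contains it induces a nonempty connected subgraph of `TG`. -/
def IsTreeDecomp {V T : Type*} (G : SimpleGraph V) (TG : SimpleGraph T) (B : T → Set V) : Prop :=
  TG.IsTree ∧
  (∀ v, ∃ t, v ∈ B t) ∧
  (∀ ⦃u v⦄, G.Adj u v → ∃ t, u ∈ B t ∧ v ∈ B t) ∧
  (∀ v, (TG.induce {t | v ∈ B t}).Connected)

/-- The tree-width of `G` is at most `k`. -/
def twLE {V : Type*} (G : SimpleGraph V) (k : ℕ) : Prop :=
  ∃ (T : Type) (TG : SimpleGraph T) (B : T → Set V),
    IsTreeDecomp G TG B ∧ ∀ t, Nat.card (B t) ≤ k + 1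

/-- A path-decomposition of `G` with `t` bags. -/
def IsPathDecomp {V : Type*} (G : SimpleGraph V) (t : ℕ) (B : Fin t → Set V) : Prop :=
  (∀ v, ∃ i, v ∈ B i) ∧
  (∀ ⦃u v⦄, G.Adj u v → ∃ i, u ∈ B i ∧ v ∈ B i) ∧
  (∀ i j l : Fin t, i ≤ j → j ≤ l → B i ∩ B l ⊆ B j)

/-- The path-width of `G` is at most `k`. -/
def pwLE {V : Type*} (G : SimpleGraph V) (k : ℕ) : Prop :=
  ∃ (t : ℕ) (B : Fin t → Set V), IsPathDecomp G t B ∧ ∀ i, Nat.card (B i) ≤ k + 1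

/-- The tree-depth of `G` is at most `d`: there is a strict forest order (the
strict ancestor relation of a rooted forest) whose comparability graph contains
`G`, with all chains of at most `d` vertices. -/
def tdLE {V : Type*} (G : SimpleGraph V) (d : ℕ) : Prop :=
  ∃ lt : V → V → Prop,
    Transitive lt ∧
    (∀ u v w, lt u w → lt v w → lt u v ∨ lt v u ∨ u = v) ∧
    (∀ ⦃u v⦄, G.Adj u v → lt u v ∨ lt v u) ∧
    ∃ f : V → Fin d, ∀ u v, lt u v → f u < f v

/-- `P` is an `H`-partition of `G`: the parts partition `V(G)` and every edge of
`G` lies within a part or between parts indexed by adjacent vertices of `H`. -/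
def IsHPartition {V W : Type*} (G : SimpleGraph V) (H : SimpleGraph W) (P : W → Set V) : Prop :=
  (∀ v, ∃! x, v ∈ P x) ∧
  ∀ ⦃u v⦄, G.Adj u v → ∀ ⦃x y⦄, u ∈ P x → v ∈ P y → x = y ∨ H.Adj x y

/-- The tree-partition-width of `G` is at most `m`. -/
def tpwLE {V : Type*} (G : SimpleGraph V) (m : ℕ) : Prop :=
  ∃ (T : Type) (TG : SimpleGraph T) (P : T → Set V),
    TG.IsTree ∧ IsHPartition G TG P ∧ ∀ x, Nat.card (P x) ≤ m

/-- The star with centre `none` and leaves `some i`, `i : ι`. -/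
def starGraph (ι : Type*) : SimpleGraph (Option ι) where
  Adj a b := a ≠ b ∧ (a = none ∨ b = none)
  symm := ⟨by rintro a b ⟨hne, h⟩; exact ⟨hne.symm, h.symm⟩⟩
  loopless := ⟨by rintro a ⟨hne, _⟩; exact hne rfl⟩

/-- A graph class is hereditary if it is closed under induced subgraphs. -/
def Hereditary (𝒢 : ∀ V : Type, SimpleGraph V → Prop) : Prop :=
  ∀ (V : Type) (G : SimpleGraph V), 𝒢 V G → ∀ S : Set V, 𝒢 S (G.induce S)

/-- Every `n`-vertex graph of the class has a balanced separator of size at most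
`c * n ^ (1 - ε)`. -/
def SepBound (𝒢 : ∀ V : Type, SimpleGraph V → Prop) (c ε : ℝ) : Prop :=
  ∀ (V : Type) [Fintype V] (G : SimpleGraph V), 𝒢 V G →
    ∃ S : Finset V, (S.card : ℝ) ≤ c * (Fintype.card V : ℝ) ^ (1 - ε) ∧
      CompsLER G ↑S ((Fintype.card V : ℝ) / 2)

/-- The `k`-th power of the `n`-vertex path. -/
def pathPow (n k : ℕ) : SimpleGraph (Fin n) where
  Adj i j := i ≠ j ∧ (i.val : ℤ) - j.val ≤ k ∧ (j.val : ℤ) - i.val ≤ k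
  symm := ⟨by rintro i j ⟨hne, h1, h2⟩; exact ⟨hne.symm, h2, h1⟩⟩
  loopless := ⟨by rintro i ⟨hne, _⟩; exact hne rfl⟩

open scoped Classical

namespace SimpleGraph

section Components

variable {V : Type*} (G : SimpleGraph V)

def ComponentsLE (W : Set V) (q : ℕ) : Prop :=
  ∀ c : (G.induce W).ConnectedComponent, Nat.card c.supp ≤ q

variable {G}

lemma componentsLE_of_card_le {W : Finset V} {q : ℕ} (h : W.card ≤ q) :
    G.ComponentsLE W q := fun c =>
  calc Nat.card c.supp ≤ Nat.card (W : Set V) :=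
        Nat.card_le_card_of_injective _ Subtype.val_injective
    _ = W.card := Nat.card_eq_finsetCard W
    _ ≤ q := h

lemma Walk.support_subset_of_closed {Y : Set V} (hY : ∀ u ∈ Y, ∀ w, G.Adj u w → w ∈ Y) :
    ∀ {u v : V} (p : G.Walk u v), u ∈ Y → ∀ x ∈ p.support, x ∈ Y
  | _, _, .nil, hu, x, hx => by simp_all
  | _, _, .cons h p, hu, x, hx => by
    rw [Walk.support_cons, List.mem_cons] at hx
    rcases hx with rfl | hx
    · exact hu
    · exact Walk.support_subset_of_closed hY p (hY _ hu _ h) x hx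

lemma ComponentsLE.of_closed_cover [Finite V] {W : Set V} {q : ℕ}
    (h : ∀ v ∈ W, ∃ Y ⊆ W, v ∈ Y ∧ (∀ u ∈ Y, ∀ w ∈ W, G.Adj u w → w ∈ Y) ∧
      G.ComponentsLE Y q) : G.ComponentsLE W q := by
  intro c
  obtain ⟨⟨v, hvW⟩, rfl⟩ := c.exists_rep
  obtain ⟨Y, hYW, hvY, hclosed, hY⟩ := h v hvW
  have hmem (x : W) (hx : x ∈ ((G.induce W).connectedComponentMk ⟨v, hvW⟩).supp) :
      ∃ hxY : x.1 ∈ Y,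
        ⟨x.1, hxY⟩ ∈ ((G.induce Y).connectedComponentMk ⟨v, hvY⟩).supp := by
    obtain ⟨p⟩ := (ConnectedComponent.exact hx).symm
    have hpY := Walk.support_subset_of_closed (Y := {x : W | x.1 ∈ Y})
      (fun u hu w huw => hclosed _ hu _ w.2 huw) p hvY
    set p' := p.map (Embedding.induce W).toHom
    have hp'Y : ∀ z ∈ p'.support, z ∈ Y := by
      intro z hz
      rw [Walk.support_map, List.mem_map] at hz
      obtain ⟨z', hz', rfl⟩ := hz
      exact hpY z' hz'
    exact ⟨hp'Y _ p'.end_mem_support,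
      ConnectedComponent.sound (p'.induce Y hp'Y).reachable.symm⟩
  choose f hf using hmem
  calc Nat.card ((G.induce W).connectedComponentMk ⟨v, hvW⟩).supp
      ≤ Nat.card ((G.induce Y).connectedComponentMk ⟨v, hvY⟩).supp :=
        Nat.card_le_card_of_injective (fun x => ⟨_, hf x.1 x.2⟩) fun x y hxy => by
          simpa [Subtype.ext_iff] using hxy
    _ ≤ q := hY _

end Components

section Branches

variable {T : Type*} {TG : SimpleGraph T}

def branch (TG : SimpleGraph T) (s t : T) : Set T :=
  {x | (TG.deleteEdges {s(s, t)}).Reachable t x}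

lemma IsAcyclic.notMem_branch (hT : TG.IsAcyclic) {s t : T} (hst : TG.Adj s t) :
    s ∉ TG.branch s t := fun h =>
  isAcyclic_iff_forall_adj_isBridge.mp hT hst h.symm

lemma mem_and_mem_of_mem_branch_of_notMem_branch {P : Set T} (hP : (TG.induce P).Preconnected)
    {s t x y : T} (hx : x ∈ P) (hy : y ∈ P) (hxb : x ∈ TG.branch s t)
    (hyb : y ∉ TG.branch s t) :
    s ∈ P ∧ t ∈ P := by
  obtain ⟨w⟩ := hP ⟨x, hx⟩ ⟨y, hy⟩
  set w' := w.map (Embedding.induce P).toHom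
  have hsupp : ∀ z ∈ w'.support, z ∈ P := by
    intro z hz
    rw [Walk.support_map, List.mem_map] at hz
    obtain ⟨z', -, rfl⟩ := hz
    exact z'.2
  have hedge : s(s, t) ∈ w'.edges := by
    by_contra h
    exact hyb (hxb.trans (reachable_deleteEdges_iff_exists_walk.mpr ⟨w', h⟩))
  exact ⟨hsupp _ (w'.fst_mem_support_of_mem_edges hedge),
    hsupp _ (w'.snd_mem_support_of_mem_edges hedge)⟩

lemma Reachable.exists_adj_mem_branch {t x : T} (h : TG.Reachable t x) (hne : x ≠ t) :
    ∃ c, TG.Adj t c ∧ x ∈ TG.branch t c := by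
  obtain ⟨p, hp, -⟩ := h.exists_path_of_dist
  obtain ⟨c, htc, q, rfl⟩ := Walk.exists_eq_cons_of_ne hne.symm p
  rw [Walk.cons_isPath_iff] at hp
  refine ⟨c, htc, reachable_deleteEdges_iff_exists_walk.mpr ⟨q, fun he => hp.2 ?_⟩⟩
  exact q.fst_mem_support_of_mem_edges he

lemma IsAcyclic.notMem_branch_swap (hT : TG.IsAcyclic) {s t x : T} (hst : TG.Adj s t)
    (hx : x ∈ TG.branch s t) : x ∉ TG.branch t s := by
  intro hx'
  change (TG.deleteEdges {s(t, s)}).Reachable s x at hx'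
  rw [Sym2.eq_swap] at hx'
  exact isAcyclic_iff_forall_adj_isBridge.mp hT hst (hx'.trans hx.symm)

lemma IsAcyclic.mem_support_of_mem_branch (hT : TG.IsAcyclic) {t c x : T} (htc : TG.Adj t c)
    (hx : x ∈ TG.branch t c) (p : TG.Walk t x) : c ∈ p.support := by
  have hbridge := isAcyclic_iff_forall_adj_isBridge.mp hT htc
  have he : s(t, c) ∈ p.edges := by
    by_contra h
    exact hbridge ((reachable_deleteEdges_iff_exists_walk.mpr ⟨p, h⟩).trans hx.symm)
  exact p.snd_mem_support_of_mem_edges he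

lemma IsAcyclic.branch_subset_branch (hT : TG.IsAcyclic) {s t c : T} (hst : TG.Adj s t)
    (htc : TG.Adj t c) (hcs : c ≠ s) : TG.branch t c ⊆ TG.branch s t := by
  intro x hx
  obtain ⟨p, hp⟩ := reachable_deleteEdges_iff_exists_walk.mp hx
  by_cases hst' : s(s, t) ∈ p.edges
  · have ht := p.snd_mem_support_of_mem_edges hst'
    refine absurd ?_ (isAcyclic_iff_forall_adj_isBridge.mp hT htc)
    exact (reachable_deleteEdges_iff_exists_walk.mpr
      ⟨p.takeUntil t ht, fun h => hp (p.edges_takeUntil_subset_edges ht h)⟩).symm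
  · refine reachable_deleteEdges_iff_exists_walk.mpr ⟨Walk.cons htc p, ?_⟩
    rw [Walk.edges_cons, List.mem_cons, not_or]
    refine ⟨fun h => ?_, hst'⟩
    rcases Sym2.eq_iff.mp h with ⟨rfl, -⟩ | ⟨rfl, -⟩
    · exact hst.ne rfl
    · exact hcs rfl

lemma IsAcyclic.dist_lt_of_mem_branch (hT : TG.IsAcyclic) {t c x : T} (htc : TG.Adj t c)
    (hx : x ∈ TG.branch t c) : TG.dist c x < TG.dist t x := by
  have hreach : TG.Reachable t x := htc.reachable.trans (hx.mono (deleteEdges_le _))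
  obtain ⟨p, hp⟩ := hreach.exists_walk_length_eq_dist
  have hc := hT.mem_support_of_mem_branch htc hx p
  calc TG.dist c x ≤ (p.dropUntil c hc).length := dist_le _
    _ < p.length := Walk.length_dropUntil_lt_length hc htc.ne'
    _ = TG.dist t x := hp

end Branches

section Chop

variable {V : Type*} {G : SimpleGraph V} {k q : ℕ} {W U A : Finset V}

/-- `U ⊆ W` is cut off from the rest of `W` by deleting `U \ A`, and the kept part `A` of `U` has
small components. -/
structure IsChop (G : SimpleGraph V) (k q : ℕ) (W U A : Finset V) : Prop where
  subset : A ⊆ U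
  subset_ground : U ⊆ W
  card_sdiff_le : (U \ A).card ≤ k + 1
  le_card : q ≤ A.card
  lt_card : q < U.card
  adj_mem : ∀ u ∈ A, ∀ w ∈ W, G.Adj u w → w ∈ U
  componentsLE : G.ComponentsLE A q

lemma exists_isChop_of_bag {β P : Set V} (hUW : U ⊆ W)
    (hβ : (U.filter (· ∈ β)).card ≤ k + 1) (hUP : ∀ v ∈ U, v ∈ P → v ∈ β)
    (hadj : ∀ u ∈ U, u ∉ P → ∀ w ∈ W, G.Adj u w → w ∈ U)
    (hcomp : G.ComponentsLE ↑(U.filter (· ∉ β)) q) (hbig : q < (U.filter (· ∉ P)).card) :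
    ∃ A, IsChop G k q W U A := by
  set E := U.filter (· ∉ β)
  set D := U.filter (· ∉ P)
  have hED : E ⊆ D := fun v hv => by
    simp only [E, D, Finset.mem_filter] at hv ⊢
    exact ⟨hv.1, fun hP => hv.2 (hUP v hv.1 hP)⟩
  obtain ⟨Z, hZ, hZcard⟩ := Finset.exists_subset_card_eq (s := D \ E) (n := q - E.card) (by
    rw [Finset.card_sdiff_of_subset hED]; omega)
  have hZD : Z ⊆ D := hZ.trans Finset.sdiff_subset
  have hAD : E ∪ Z ⊆ D := Finset.union_subset hED hZD
  have hAcard : (E ∪ Z).card = E.card + (q - E.card) := by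
    rw [Finset.card_union_of_disjoint (Finset.disjoint_of_subset_right hZ Finset.disjoint_sdiff),
      hZcard]
  refine ⟨E ∪ Z, ⟨hAD.trans (Finset.filter_subset _ _), hUW, ?_, by omega,
    hbig.trans_le (Finset.card_le_card (Finset.filter_subset _ _)),
    fun u hu w hw huw => ?_, ?_⟩⟩
  · refine le_trans (Finset.card_le_card fun v hv => ?_) hβ
    simp only [E, Finset.mem_sdiff, Finset.mem_union, Finset.mem_filter, not_or, not_and,
      not_not] at hv ⊢
    exact ⟨hv.1, hv.2.1 hv.1⟩
  · have hu' := Finset.mem_filter.mp (hAD hu)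
    exact hadj u hu'.1 hu'.2 w hw huw
  · by_cases hqE : q ≤ E.card
    · rwa [Finset.card_eq_zero.mp (by omega : Z.card = 0), Finset.union_empty]
    · exact componentsLE_of_card_le (by omega)

lemma IsChop.exists_componentsLE_sdiff [Finite V] (hc : IsChop G k q W U A) {S : Finset V}
    (hS : S ⊆ W \ U) (hcomp : G.ComponentsLE ↑((W \ U) \ S) q) :
    ∃ S' ⊆ W, S'.card ≤ (U \ A).card + S.card ∧ G.ComponentsLE ↑(W \ S') q := by
  refine ⟨U \ A ∪ S, Finset.union_subset (Finset.sdiff_subset.trans hc.subset_ground)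
    (hS.trans Finset.sdiff_subset), Finset.card_union_le _ _,
    ComponentsLE.of_closed_cover fun v hv => ?_⟩
  have hSU : ∀ x ∈ S, x ∉ U := fun x hx => (Finset.mem_sdiff.mp (hS hx)).2
  have hmem : ∀ x, x ∈ (↑(W \ (U \ A ∪ S)) : Set V) ↔
      x ∈ W ∧ (x ∈ U → x ∈ A) ∧ x ∉ S := by
    intro x
    simp only [Finset.coe_sdiff, Finset.coe_union, Set.mem_sdiff, Set.mem_union, Finset.mem_coe,
      not_or, not_and, not_not]
  rw [hmem] at hv
  by_cases hvU : v ∈ U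
  · refine ⟨A, fun a ha => (hmem a).mpr ⟨hc.subset_ground (hc.subset ha), fun _ => ha,
      fun haS => hSU a haS (hc.subset ha)⟩, hv.2.1 hvU, fun u hu w hw huw => ?_,
      hc.componentsLE⟩
    rw [hmem] at hw
    exact hw.2.1 (hc.adj_mem u hu w hw.1 huw)
  · refine ⟨↑((W \ U) \ S), fun a ha => ?_, ?_, fun u hu w hw huw => ?_, hcomp⟩
    · simp only [Finset.coe_sdiff, Set.mem_sdiff, Finset.mem_coe] at ha
      exact (hmem a).mpr ⟨ha.1.1, fun h => absurd h ha.1.2, ha.2⟩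
    · simpa using ⟨⟨hv.1, hvU⟩, hv.2.2⟩
    · rw [hmem] at hw
      simp only [Finset.coe_sdiff, Set.mem_sdiff, Finset.mem_coe] at hu ⊢
      refine ⟨⟨hw.1, fun hwU => hu.1.2 ?_⟩, hw.2.2⟩
      exact hc.adj_mem w (hw.2.1 hwU) u hu.1.1 huw.symm

end Chop

section TreeDecomposition

variable {V T : Type*} {G : SimpleGraph V} {TG : SimpleGraph T} {B : T → Set V}

variable (B) in
noncomputable def verticesIn (W : Finset V) (K : Set T) : Finset V :=
  W.filter fun v => ∃ x ∈ K, v ∈ B x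

variable (TG B) in
noncomputable def beyond (W : Finset V) (s t : T) : Finset V :=
  (verticesIn B W (TG.branch s t)).filter (· ∉ B s)

variable {W : Finset V} {s t c : T}

lemma verticesIn_subset (K : Set T) : verticesIn B W K ⊆ W := Finset.filter_subset _ _

lemma beyond_subset_verticesIn : beyond TG B W s t ⊆ verticesIn B W (TG.branch s t) :=
  Finset.filter_subset _ _

lemma IsTreeDecomp.mem_bag_of_mem_bag (hG : IsTreeDecomp G TG B) (hst : TG.Adj s t) {v : V}
    (hv : v ∈ verticesIn B W (TG.branch s t)) (hvs : v ∈ B s) : v ∈ B t := by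
  obtain ⟨hT, -, -, hbags⟩ := hG
  obtain ⟨x, hx, hvx⟩ := (Finset.mem_filter.mp hv).2
  exact (mem_and_mem_of_mem_branch_of_notMem_branch (hbags v).preconnected hvx hvs hx
    (hT.isAcyclic.notMem_branch hst)).2

lemma IsTreeDecomp.mem_branch_of_mem_beyond (hG : IsTreeDecomp G TG B) {v : V}
    (hv : v ∈ beyond TG B W s t) {y : T} (hvy : v ∈ B y) : y ∈ TG.branch s t := by
  obtain ⟨hv, hvs⟩ := Finset.mem_filter.mp hv
  obtain ⟨x, hx, hvx⟩ := (Finset.mem_filter.mp hv).2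
  obtain ⟨-, -, -, hbags⟩ := hG
  by_contra hy
  exact hvs (mem_and_mem_of_mem_branch_of_notMem_branch (hbags v).preconnected hvx hvy hx hy).1

lemma IsTreeDecomp.mem_verticesIn_of_adj (hG : IsTreeDecomp G TG B) {u w : V}
    (hu : u ∈ beyond TG B W s t) (hw : w ∈ W) (huw : G.Adj u w) :
    w ∈ verticesIn B W (TG.branch s t) := by
  obtain ⟨-, -, hedges, -⟩ := id hG
  obtain ⟨y, huy, hwy⟩ := hedges huw
  exact Finset.mem_filter.mpr ⟨hw, y, hG.mem_branch_of_mem_beyond hu huy, hwy⟩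

lemma IsTreeDecomp.beyond_subset_beyond (hG : IsTreeDecomp G TG B) (hst : TG.Adj s t)
    (htc : TG.Adj t c) (hcs : c ≠ s) : beyond TG B W t c ⊆ beyond TG B W s t := by
  intro v hv
  obtain ⟨hv, hvt⟩ := Finset.mem_filter.mp hv
  obtain ⟨hvW, x, hx, hvx⟩ := Finset.mem_filter.mp hv
  have hv' : v ∈ verticesIn B W (TG.branch s t) :=
    Finset.mem_filter.mpr ⟨hvW, x, hG.1.isAcyclic.branch_subset_branch hst htc hcs hx, hvx⟩
  exact Finset.mem_filter.mpr ⟨hv', fun hvs => hvt (hG.mem_bag_of_mem_bag hst hv' hvs)⟩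

lemma IsTreeDecomp.sum_dist_beyond_lt (hG : IsTreeDecomp G TG B) {f : V → T}
    (hf : ∀ v, v ∈ B (f v)) (hst : TG.Adj s t) (htc : TG.Adj t c) (hcs : c ≠ s)
    (hne : (beyond TG B W t c).Nonempty) :
    ∑ v ∈ beyond TG B W t c, TG.dist c (f v) < ∑ v ∈ beyond TG B W s t, TG.dist t (f v) :=
  calc ∑ v ∈ beyond TG B W t c, TG.dist c (f v)
      < ∑ v ∈ beyond TG B W t c, TG.dist t (f v) :=
        Finset.sum_lt_sum_of_nonempty hne fun v hv =>
          hG.1.isAcyclic.dist_lt_of_mem_branch htc (hG.mem_branch_of_mem_beyond hv (hf v))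
    _ ≤ ∑ v ∈ beyond TG B W s t, TG.dist t (f v) :=
        Finset.sum_le_sum_of_subset (hG.beyond_subset_beyond hst htc hcs)

lemma IsTreeDecomp.exists_adj_forall_card_beyond_le {q : ℕ} (hG : IsTreeDecomp G TG B)
    (hst : TG.Adj s t) (hbig : q < (beyond TG B W s t).card) :
    ∃ s' t', TG.Adj s' t' ∧ q < (beyond TG B W s' t').card ∧
      ∀ c, TG.Adj t' c → c ≠ s' → (beyond TG B W t' c).card ≤ q := by
  -- The tree may be infinite: the descent is measured by the distances to fixed bags containing
  -- the vertices beyond the current edge.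
  obtain ⟨-, hcover, -, -⟩ := id hG
  choose f hf using hcover
  induction hμ : ∑ v ∈ beyond TG B W s t, TG.dist t (f v) using Nat.strong_induction_on
    generalizing s t with
  | _ n ih =>
    by_cases h : ∃ c, TG.Adj t c ∧ c ≠ s ∧ q < (beyond TG B W t c).card
    · obtain ⟨c, htc, hcs, hc⟩ := h
      exact ih _ (hμ ▸ hG.sum_dist_beyond_lt hf hst htc hcs (Finset.card_pos.mp (by omega)))
        htc hc rfl
    · push Not at h
      exact ⟨s, t, hst, hbig, h⟩

lemma IsTreeDecomp.exists_adj_mem_beyond (hG : IsTreeDecomp G TG B) {v : V} (hvW : v ∈ W)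
    {x : T} (hvx : v ∈ B x) (hvt : v ∉ B t) :
    ∃ c, TG.Adj t c ∧ x ∈ TG.branch t c ∧ v ∈ beyond TG B W t c := by
  obtain ⟨c, htc, hx⟩ := (hG.1.connected t x).exists_adj_mem_branch
    (by rintro rfl; exact hvt hvx)
  have hv : v ∈ verticesIn B W (TG.branch t c) := Finset.mem_filter.mpr ⟨hvW, x, hx, hvx⟩
  exact ⟨c, htc, hx, Finset.mem_filter.mpr ⟨hv, hvt⟩⟩

lemma IsTreeDecomp.componentsLE_filter_notMem_bag [Finite V] {q : ℕ} (hG : IsTreeDecomp G TG B)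
    {U : Finset V} (hUW : U ⊆ W)
    (hU : ∀ v ∈ U, v ∉ B t → ∃ c, TG.Adj t c ∧ v ∈ beyond TG B W t c ∧
      beyond TG B W t c ⊆ U ∧ (beyond TG B W t c).card ≤ q) :
    G.ComponentsLE ↑(U.filter (· ∉ B t)) q := by
  refine ComponentsLE.of_closed_cover fun v hv => ?_
  obtain ⟨hvU, hvt⟩ := Finset.mem_filter.mp hv
  obtain ⟨c, htc, hvc, hcU, hcq⟩ := hU v hvU hvt
  have hct : ∀ u ∈ beyond TG B W t c, u ∉ B t := fun u hu => (Finset.mem_filter.mp hu).2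
  refine ⟨↑(beyond TG B W t c), fun u hu => Finset.mem_filter.mpr ⟨hcU hu, hct u hu⟩, hvc,
    fun u hu w hw huw => ?_, componentsLE_of_card_le hcq⟩
  obtain ⟨hwU, hwt⟩ := Finset.mem_filter.mp hw
  exact Finset.mem_filter.mpr ⟨hG.mem_verticesIn_of_adj hu (hUW hwU) huw, hwt⟩

lemma card_filter_mem_le_natCard [Finite V] (U : Finset V) (β : Set V) :
    (U.filter (· ∈ β)).card ≤ Nat.card β := by
  rw [← Nat.card_eq_finsetCard]
  exact Nat.card_le_card_of_injective (fun v => ⟨v.1, (Finset.mem_filter.mp v.2).2⟩)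
    fun v w h => Subtype.ext (by simpa using congrArg Subtype.val h)

lemma IsTreeDecomp.exists_isChop_of_adj [Finite V] {k q : ℕ} (hG : IsTreeDecomp G TG B)
    (hwt : Nat.card (B t) ≤ k + 1) (hst : TG.Adj s t) (hbig : q < (beyond TG B W s t).card)
    (hsmall : ∀ c, TG.Adj t c → c ≠ s → (beyond TG B W t c).card ≤ q) :
    ∃ U A, IsChop G k q W U A := by
  refine ⟨_, exists_isChop_of_bag (β := B t) (P := B s) (verticesIn_subset _)
    ((card_filter_mem_le_natCard _ _).trans hwt) (fun v hv => hG.mem_bag_of_mem_bag hst hv)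
    (fun u hu hus w hw => hG.mem_verticesIn_of_adj (Finset.mem_filter.mpr ⟨hu, hus⟩) hw)
    (hG.componentsLE_filter_notMem_bag (verticesIn_subset _) fun v hv hvt => ?_) hbig⟩
  obtain ⟨hvW, x, hx, hvx⟩ := Finset.mem_filter.mp hv
  obtain ⟨c, htc, hxc, hvc⟩ := hG.exists_adj_mem_beyond hvW hvx hvt
  have hcs : c ≠ s := by
    rintro rfl
    exact hG.1.isAcyclic.notMem_branch_swap hst hx hxc
  exact ⟨c, htc, hvc, (hG.beyond_subset_beyond hst htc hcs).trans beyond_subset_verticesIn,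
    hsmall c htc hcs⟩

lemma IsTreeDecomp.exists_isChop_of_forall_adj [Finite V] {k q : ℕ} (hG : IsTreeDecomp G TG B)
    (hwt : Nat.card (B t) ≤ k + 1) (hW : q < W.card)
    (hsmall : ∀ c, TG.Adj t c → (beyond TG B W t c).card ≤ q) :
    ∃ U A, IsChop G k q W U A := by
  refine ⟨W, exists_isChop_of_bag (β := B t) (P := ∅) subset_rfl
    ((card_filter_mem_le_natCard _ _).trans hwt) (fun _ _ h => absurd h id)
    (fun _ _ _ w hw _ => hw)
    (hG.componentsLE_filter_notMem_bag subset_rfl fun v hv hvt => ?_) (by simpa using hW)⟩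
  obtain ⟨-, hcover, -, -⟩ := id hG
  obtain ⟨x, hvx⟩ := hcover v
  obtain ⟨c, htc, -, hvc⟩ := hG.exists_adj_mem_beyond hv hvx hvt
  exact ⟨c, htc, hvc, beyond_subset_verticesIn.trans (verticesIn_subset _), hsmall c htc⟩

lemma IsTreeDecomp.exists_isChop [Finite V] {k q : ℕ} (hG : IsTreeDecomp G TG B)
    (hw : ∀ t, Nat.card (B t) ≤ k + 1) (hW : q < W.card) : ∃ U A, IsChop G k q W U A := by
  obtain ⟨t₀⟩ := hG.1.connected.nonempty
  by_cases h : ∃ c, TG.Adj t₀ c ∧ q < (beyond TG B W t₀ c).card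
  · obtain ⟨c, htc, hc⟩ := h
    obtain ⟨s, t, hst, hbig, hsmall⟩ := hG.exists_adj_forall_card_beyond_le htc hc
    exact hG.exists_isChop_of_adj (hw t) hst hbig hsmall
  · push Not at h
    exact hG.exists_isChop_of_forall_adj (hw t₀) hW h

end TreeDecomposition

section Separator

variable {V : Type*} {G : SimpleGraph V} {k q : ℕ}

lemma exists_subset_card_eq_componentsLE_sdiff (W : Finset V) :
    ∃ S ⊆ W, S.card = W.card - q ∧ G.ComponentsLE ↑(W \ S) q := by
  obtain ⟨K, hKW, hK⟩ := Finset.exists_subset_card_eq (min_le_left W.card q)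
  refine ⟨W \ K, Finset.sdiff_subset, ?_, ?_⟩
  · rw [Finset.card_sdiff_of_subset hKW, hK]
    omega
  · rw [Finset.sdiff_sdiff_eq_self hKW]
    exact componentsLE_of_card_le (hK.trans_le (min_le_right _ _))

variable [Finite V] (hchop : ∀ W : Finset V, q < W.card → ∃ U A, IsChop G k q W U A)
include hchop

lemma exists_componentsLE_sdiff_of_card_le_two_mul_add (W : Finset V) (hW : W.card ≤ 2 * q + k) :
    ∃ S ⊆ W, S.card ≤ k + 1 ∧ G.ComponentsLE ↑(W \ S) q := by
  by_cases hWq : W.card ≤ q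
  · exact ⟨∅, Finset.empty_subset _, by simp, by simpa using componentsLE_of_card_le hWq⟩
  obtain ⟨U, A, hc⟩ := hchop W (by omega)
  obtain ⟨S, hS, hScard, hcomp⟩ :=
    exists_subset_card_eq_componentsLE_sdiff (G := G) (q := q) (W \ U)
  obtain ⟨S', hS', hS'card, hcomp'⟩ := hc.exists_componentsLE_sdiff hS hcomp
  have := Finset.card_sdiff_of_subset hc.subset_ground
  have := Finset.card_sdiff_of_subset hc.subset
  have := Finset.card_le_card hc.subset
  have := hc.card_sdiff_le
  have := hc.le_card
  exact ⟨S', hS', by omega, hcomp'⟩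

theorem exists_componentsLE_sdiff_of_card_le (R : ℕ) (W : Finset V)
    (hW : W.card ≤ R * (q + 1) + 2 * q + k) :
    ∃ S ⊆ W, S.card ≤ (R + 1) * (k + 1) ∧ G.ComponentsLE ↑(W \ S) q := by
  induction R generalizing W with
  | zero => simpa using exists_componentsLE_sdiff_of_card_le_two_mul_add hchop W (by simpa using hW)
  | succ R ih =>
    by_cases hWq : W.card ≤ q
    · exact ⟨∅, Finset.empty_subset _, by simp, by simpa using componentsLE_of_card_le hWq⟩
    obtain ⟨U, A, hc⟩ := hchop W (by omega)
    have hWU := Finset.card_sdiff_of_subset hc.subset_ground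
    have := hc.lt_card
    obtain ⟨S, hS, hScard, hcomp⟩ :=
      ih (W \ U) (by rw [hWU]; exact Nat.sub_le_iff_le_add.mpr (by linarith))
    obtain ⟨S', hS', hS'card, hcomp'⟩ := hc.exists_componentsLE_sdiff hS hcomp
    exact ⟨S', hS', by nlinarith [hc.card_sdiff_le], hcomp'⟩

end Separator

end SimpleGraph

theorem treewidth_separator_general (p q k n : ℕ) (hn : n ≤ p / (k + 1) * (q + 1) + q + k - 1)
    (hpk : k + 1 ≤ p)
    (V : Type) [Fintype V] (hcard : Fintype.card V = n)
    (G : SimpleGraph V) (htw : twLE G k) :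
    ∃ S : Finset V, S.card ≤ p ∧ CompsLE G (↑S) q := by
  obtain ⟨T, TG, B, hG, hw⟩ := htw
  obtain ⟨r, hr⟩ : ∃ r, p / (k + 1) = r + 1 :=
    ⟨p / (k + 1) - 1, by have := (Nat.one_le_div_iff (by omega)).mpr hpk; omega⟩
  obtain ⟨S, -, hScard, hS⟩ := exists_componentsLE_sdiff_of_card_le (k := k) (q := q)
    (fun W hW => hG.exists_isChop hw hW) r Finset.univ (by
      rw [Finset.card_univ, hcard]
      rw [hr, add_one_mul] at hn
      omega)
  refine ⟨S, hScard.trans ?_, ?_⟩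
  · rw [← hr]
    exact Nat.div_mul_le_self p (k + 1)
  · have hSc : (↑(Finset.univ \ S) : Set V) = (↑S)ᶜ := by
      simp [Set.compl_eq_univ_sdiff]
    rwa [hSc] at hS

theorem treewidth_separator (p q k n : ℕ) (hp : 0 < p) (hq : 0 < q) (hk : 0 < k)
    (hn0 : 0 < n) (hn : n ≤ p / (k + 1) * (q + 1) + q + k - 1) (hpk : k + 1 ≤ p)
    (V : Type) [Fintype V] (hcard : Fintype.card V = n)
    (G : SimpleGraph V) (htw : twLE G k) :
    ∃ S : Finset V, S.card ≤ p ∧ CompsLE G (↑S) q :=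
  treewidth_separator_general p q k n hn hpk V hcard G htw
end

section
/- If the n-vertex path P is a subgraph of H ⊠ K_m for some graph H with tree-depth at most d and m ≥ 1, then n ≤ (2m)^d. -/
open SimpleGraph

/-!
Take the image of the path in `H ⊠ K_m` as a walk whose consecutive vertices project to equal or
adjacent, hence comparable, vertices of the rooted forest witnessing the tree-depth of `H`. Its
projection has a least vertex `r`, an ancestor of all the others. At most `m` vertices of the walk
project to `r`, and removing them cuts the walk into at most `m + 1` segments lying strictly
above `r`, that is in a forest of depth one less. By induction on the depth, a walk of depth at
most `d` has fewer than `(2m)^d` vertices, since `(m + 1) (2m)^d ≤ (2m)^(d+1)`.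
-/

theorem List.length_add_one_le_mul_of_infix {α : Type*} (p : α → Bool) (N : ℕ) (l : List α)
    (h : ∀ s, s <:+: l → (∀ x ∈ s, p x = false) → s.length + 1 ≤ N) :
    l.length + 1 ≤ (l.countP p + 1) * N := by
  cases hfind : l.find? p with
  | none =>
    have hfree : ∀ x ∈ l, p x = false := by simpa using hfind
    simpa [List.countP_eq_zero.mpr (by simpa using hfree)] using h l (List.infix_refl l) hfree
  | some x =>
    obtain ⟨hx, l₁, l₂, rfl, hl₁⟩ := List.find?_eq_some_iff_append.mp hfind
    have hl₂ : l₂ <:+ l₁ ++ x :: l₂ := (List.suffix_cons x l₂).trans (List.suffix_append l₁ _)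
    have h₁ : l₁.length + 1 ≤ N := h l₁ (List.prefix_append l₁ _).isInfix (by simpa using hl₁)
    have h₂ : l₂.length + 1 ≤ (l₂.countP p + 1) * N :=
      List.length_add_one_le_mul_of_infix p N l₂ fun s hs => h s (hs.trans hl₂.isInfix)
    have hcount : (l₁ ++ x :: l₂).countP p = l₂.countP p + 1 := by
      simp [List.countP_eq_zero.mpr (by simpa using hl₁), hx]
    calc (l₁ ++ x :: l₂).length + 1 = (l₁.length + 1) + (l₂.length + 1) := by
          rw [List.length_append, List.length_cons]; ring
      _ ≤ N + (l₂.countP p + 1) * N := add_le_add h₁ h₂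
      _ = ((l₁ ++ x :: l₂).countP p + 1) * N := by rw [hcount]; ring
termination_by l.length
decreasing_by simp_all; omega

theorem List.Nodup.countP_fst_eq_le_card {β γ : Type*} [DecidableEq β] [Fintype γ]
    {l : List (β × γ)} (hl : l.Nodup) (b : β) :
    l.countP (fun x => x.1 = b) ≤ Fintype.card γ := by
  rw [List.countP_eq_length_filter, ← List.length_map (f := Prod.snd)]
  refine ((hl.filter _).map_on fun x hx y hy hxy => Prod.ext ?_ hxy).length_le_card
  simp only [List.mem_filter, decide_eq_true_eq] at hx hy
  rw [hx.2, hy.2]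

section ForestOrder

variable {α : Type*} {lt : α → α → Prop}

theorem List.exists_forall_eq_or_lt_of_isChain (htr : ∀ ⦃a b c⦄, lt a b → lt b c → lt a c)
    (hforest : ∀ u v w, lt u w → lt v w → lt u v ∨ lt v u ∨ u = v) :
    ∀ {l : List α}, l.IsChain (fun a b => a = b ∨ lt a b ∨ lt b a) → l ≠ [] →
      ∃ r ∈ l, ∀ a ∈ l, r = a ∨ lt r a
  | [a], _, _ => ⟨a, by simp⟩
  | a :: b :: l, hl, _ => by
    obtain ⟨hab, hl⟩ := List.isChain_cons_cons.mp hl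
    obtain ⟨r, hr, hmin⟩ := List.exists_forall_eq_or_lt_of_isChain htr hforest hl (by simp)
    have hrb := hmin b (by simp)
    have : (r = a ∨ lt r a) ∨ lt a r := by
      rcases hab with rfl | hab | hba
      · exact Or.inl hrb
      · rcases hrb with rfl | hrb
        · exact Or.inr hab
        · -- `a` and `r` both lie below `b`, so the forest axiom makes them comparable
          rcases hforest a r b hab hrb with h | h | rfl
          · exact Or.inr h
          · exact Or.inl (Or.inr h)
          · exact Or.inl (Or.inl rfl)
      · rcases hrb with rfl | hrb
        · exact Or.inl (Or.inr hba)
        · exact Or.inl (Or.inr (htr hrb hba))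
    rcases this with hra | har
    · refine ⟨r, List.mem_cons_of_mem a hr, fun c hc => ?_⟩
      rcases List.mem_cons.mp hc with rfl | hc
      exacts [hra, hmin c hc]
    · refine ⟨a, List.mem_cons_self, fun c hc => ?_⟩
      rcases List.mem_cons.mp hc with rfl | hc
      · exact Or.inl rfl
      · rcases hmin c hc with rfl | hrc
        exacts [Or.inr har, Or.inr (htr har hrc)]

theorem List.Nodup.length_add_one_le_pow_of_isChain
    (htr : ∀ ⦃a b c⦄, lt a b → lt b c → lt a c)
    (hforest : ∀ u v w, lt u w → lt v w → lt u v ∨ lt v u ∨ u = v)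
    (g : α → ℕ) (hg : ∀ u v, lt u v → g u < g v) {γ : Type*} [Fintype γ] [Nonempty γ]
    (d b : ℕ) {l : List (α × γ)} (hnodup : l.Nodup)
    (hchain : l.IsChain (fun x y => x.1 = y.1 ∨ lt x.1 y.1 ∨ lt y.1 x.1))
    (hrank : ∀ x ∈ l, b ≤ g x.1 ∧ g x.1 < b + d) :
    l.length + 1 ≤ (2 * Fintype.card γ) ^ d := by
  classical
  induction d generalizing b l with
  | zero =>
    cases l with
    | nil => simp
    | cons x _ => have := hrank x List.mem_cons_self; omega
  | succ d ih =>
    have hcard := Fintype.card_pos (α := γ)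
    rcases eq_or_ne l [] with rfl | hne
    · exact Nat.one_le_pow _ _ (by omega)
    obtain ⟨r, hr, hmin⟩ := List.exists_forall_eq_or_lt_of_isChain htr hforest
      ((List.isChain_map Prod.fst).mpr hchain) (by simpa using hne)
    obtain ⟨y, hy, rfl⟩ := List.mem_map.mp hr
    have hseg : ∀ s, s <:+: l → (∀ x ∈ s, decide (x.1 = y.1) = false) →
        s.length + 1 ≤ (2 * Fintype.card γ) ^ d := by
      refine fun s hs hfree => ih (g y.1 + 1) (hnodup.sublist hs.sublist) (hchain.infix hs)
        fun x hx => ?_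
      have hxl := hs.subset hx
      have hyx : lt y.1 x.1 := (hmin x.1 (List.mem_map_of_mem hxl)).resolve_left
        (by simpa [eq_comm] using hfree x hx)
      have hgyx := hg _ _ hyx
      have hby := (hrank y hy).1
      have hxd := (hrank x hxl).2
      omega
    calc l.length + 1 ≤ (l.countP (fun x => x.1 = y.1) + 1) * (2 * Fintype.card γ) ^ d :=
          List.length_add_one_le_mul_of_infix _ _ l hseg
      _ ≤ (Fintype.card γ + 1) * (2 * Fintype.card γ) ^ d := by
          gcongr; exact hnodup.countP_fst_eq_le_card _
      _ ≤ 2 * Fintype.card γ * (2 * Fintype.card γ) ^ d := by gcongr; omega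
      _ = (2 * Fintype.card γ) ^ (d + 1) := by ring

end ForestOrder

theorem path_in_treedepth_product_general (n d m : ℕ) (hm : 1 ≤ m)
    (W : Type) (H : SimpleGraph W) (htd : tdLE H d)
    (hcont : ContainedIn (SimpleGraph.pathGraph n)
      (StrongProd H (⊤ : SimpleGraph (Fin m)))) :
    n ≤ (2 * m) ^ d := by
  obtain ⟨lt, htr, hforest, hadj, rank, hrank⟩ := htd
  obtain ⟨f, hf, hfadj⟩ := hcont
  have : Nonempty (Fin m) := Fin.pos_iff_nonempty.mp hm
  have hchain : (List.ofFn f).IsChain (fun x y => x.1 = y.1 ∨ lt x.1 y.1 ∨ lt y.1 x.1) := by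
    refine List.isChain_ofFn.mpr fun i hi => ?_
    have hpath : (pathGraph n).Adj ⟨i, by omega⟩ ⟨i + 1, hi⟩ := pathGraph_adj.mpr (Or.inl rfl)
    obtain ⟨-, heq | hH, -⟩ := hfadj hpath
    exacts [Or.inl heq, Or.inr (hadj hH)]
  have := (List.nodup_ofFn.mpr hf).length_add_one_le_pow_of_isChain htr hforest
    (fun w => rank w) hrank d 0 hchain fun x _ => ⟨Nat.zero_le _, by simp⟩
  rw [List.length_ofFn, Fintype.card_fin] at this
  omega

theorem path_in_treedepth_product (n d m : ℕ) (hn : 0 < n) (hd : 0 < d) (hm : 1 ≤ m)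
    (W : Type) (H : SimpleGraph W) (htd : tdLE H d)
    (hcont : ContainedIn (SimpleGraph.pathGraph n)
      (StrongProd H (⊤ : SimpleGraph (Fin m)))) :
    n ≤ (2 * m) ^ d :=
  path_in_treedepth_product_general n d m hm W H htd hcont
end
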